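/- (Proposition 3: divergence bound for the ε-error b2b matcher.) Let P_Y be a binary target distribution, let C be a finite prefix-free set of nonempty binary strings with |C| = 2^j, let k ≥ 1, m = jk, and let n be an integer with n ≥ k·E[ℓ(U)], where U is uniform on C. For a k-tuple c = (c₁,…,c_k) ∈ C^k write cat(c) for the concatenation and ℓ(c) for its total length. Define the probability distribution P_V on {0,1}^n by P_V(v) = Σ_{c ∈ C^k, ℓ(c) ≤ n, cat(c) is a prefix of v} 2^{−m} · Π_{i=ℓ(c)+1}^{n} P_Y(v_i) + Σ_{c ∈ C^k, ℓ(c) > n, the first n symbols of cat(c) equal v} 2^{−m}. Then D(P_V ‖ P_Y^n)/n ≤ D(P_U ‖ P_Y⁺)/E[ℓ(U)], where D(P_U ‖ P_Y⁺) = Σ_{c ∈ C} 2^{−j} log₂(2^{−j}/P_Y^{ℓ(c)}(c)). -/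

import Mathlib

/-- The probability `P_Y^{ℓ(L)}(L) = Π_i P_Y(L_i)` of a binary string `L`,
where `P_Y(1) = p`, `P_Y(0) = 1 - p`. -/
noncomputable def pstr (p : ℝ) (L : List Bool) : ℝ :=
  (L.map fun b => if b then p else 1 - p).prod

/-- Concatenation `cat(c) = c₁c₂⋯c_k` of a `k`-tuple of codewords from `C`. -/
def catk {C : Finset (List Bool)} {k : ℕ} (c : Fin k → {x // x ∈ C}) : List Bool :=
  (List.ofFn fun i => (c i : List Bool)).flatten

/-- The output distribution `P_V` on `{0,1}^n` of the ε-error b2b matcher: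
for a `k`-tuple `c ∈ C^k` with total length `ℓ(c) ≤ n` whose concatenation is a
prefix of `v`, the missing tail is generated i.i.d. `∼ P_Y` (underflow), and for
`ℓ(c) > n` the concatenation is truncated to its first `n` symbols (overflow).
Here `m = jk` and each tuple has probability `2^{-m}`. -/
noncomputable def PV (p : ℝ) (j k n : ℕ) (C : Finset (List Bool))
    (v : Fin n → Bool) : ℝ :=
  ∑ c : Fin k → {x // x ∈ C},
    ((if (catk c).length ≤ n ∧ catk c <+: List.ofFn v
      then ((2 : ℝ) ^ (j * k))⁻¹ * pstr p ((List.ofFn v).drop (catk c).length)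
      else 0) +
     (if n < (catk c).length ∧ (catk c).take n = List.ofFn v
      then ((2 : ℝ) ^ (j * k))⁻¹
      else 0))


section aux
variable {p : ℝ} (hp0 : 0 < p) (hp1 : p < 1)

lemma pstr_nil : pstr p [] = 1 := rfl

lemma pstr_cons (b : Bool) (L : List Bool) :
    pstr p (b :: L) = (if b then p else 1 - p) * pstr p L := by
  simp [pstr]

lemma pstr_append (L M : List Bool) : pstr p (L ++ M) = pstr p L * pstr p M := by
  simp [pstr]

include hp0 hp1 in
lemma pstr_pos (L : List Bool) : 0 < pstr p L := by
  induction L with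
  | nil => norm_num [pstr_nil]
  | cons b L ih =>
    rw [pstr_cons]
    exact mul_pos (by cases b <;> simp [hp0] <;> linarith) ih

include hp0 hp1 in
lemma pstr_le_one (L : List Bool) : pstr p L ≤ 1 := by
  induction L with
  | nil => simp [pstr_nil]
  | cons b L ih =>
    rw [pstr_cons]
    calc (if b then p else 1 - p) * pstr p L ≤ 1 * 1 := by
          apply mul_le_mul _ ih (le_of_lt (pstr_pos hp0 hp1 L)) zero_le_one
          cases b <;> simp <;> linarith
      _ = 1 := by ring

lemma sum_ofFn_succ {M : Type*} [AddCommMonoid M] (n : ℕ) (f : List Bool → M) :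
    ∑ v : Fin (n+1) → Bool, f (List.ofFn v)
      = ∑ b : Bool, ∑ v : Fin n → Bool, f (b :: List.ofFn v) := by
  have h := Fintype.sum_equiv (Fin.consEquiv (fun _ : Fin (n+1) => Bool)).symm (fun v => f (List.ofFn v))
    (fun q => f (q.1 :: List.ofFn q.2)) ?_
  · rw [h, Fintype.sum_prod_type]
  · intro v
    show f (List.ofFn v) = f (v 0 :: List.ofFn (Fin.tail v))
    rw [List.ofFn_succ]
    rfl

include hp0 hp1 in
lemma sum_pstr_ofFn (n : ℕ) : ∑ v : Fin n → Bool, pstr p (List.ofFn v) = 1 := by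
  induction n with
  | zero => simp [pstr_nil]
  | succ n ih =>
    rw [sum_ofFn_succ]
    simp only [pstr_cons, ← Finset.mul_sum, ih]
    simp

include hp0 hp1 in
lemma sum_prefix (L : List Bool) : ∀ (n : ℕ), L.length ≤ n →
    ∑ v : Fin n → Bool,
      (if L <+: List.ofFn v then pstr p ((List.ofFn v).drop L.length) else 0) = 1 := by
  induction L with
  | nil =>
    intro n _
    simpa using sum_pstr_ofFn hp0 hp1 n
  | cons b L ih =>
    intro n hn
    cases n with
    | zero => simp at hn
    | succ n =>
      rw [sum_ofFn_succ n (fun w => if b :: L <+: w then pstr p (w.drop (b :: L).length) else 0)]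
      have hstep : ∀ b' : Bool,
          (∑ v : Fin n → Bool,
            (if (b :: L) <+: (b' :: List.ofFn v)
              then pstr p ((b' :: List.ofFn v).drop (b :: L).length) else 0))
          = if b' = b then 1 else 0 := by
        intro b'
        by_cases hb : b' = b
        · subst hb
          simp only [List.cons_prefix_cons, List.length_cons, List.drop_succ_cons, if_pos rfl]
          simpa using ih n (by simpa using hn)
        · simp only [List.cons_prefix_cons]
          rw [if_neg hb]
          apply Finset.sum_eq_zero
          intro v _
          rw [if_neg]
          rintro ⟨h1, -⟩
          exact hb h1.symm
      rw [Finset.sum_congr rfl (fun b' _ => hstep b')]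
      simp

include hp0 hp1 in
lemma sum_prefix_mul (L : List Bool) (n : ℕ) (hL : L.length ≤ n) :
    ∑ v : Fin n → Bool,
      (if L <+: List.ofFn v then pstr p (List.ofFn v) else 0) = pstr p L := by
  have key : ∀ v : Fin n → Bool,
      (if L <+: List.ofFn v then pstr p (List.ofFn v) else 0)
      = pstr p L * (if L <+: List.ofFn v then pstr p ((List.ofFn v).drop L.length) else 0) := by
    intro v
    by_cases h : L <+: List.ofFn v
    · obtain ⟨t, ht⟩ := h
      rw [if_pos ⟨t, ht⟩, if_pos ⟨t, ht⟩, ← ht, List.drop_left, pstr_append]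
    · simp [h]
  rw [Finset.sum_congr rfl (fun v _ => key v), ← Finset.mul_sum, sum_prefix hp0 hp1 L n hL]
  ring

include hp0 hp1 in
lemma sum_indicator_eq_list (n : ℕ) (w : List Bool) (hw : w.length = n) (x : ℝ) :
    ∑ v : Fin n → Bool, (if w = List.ofFn v then x else 0) = x := by
  subst hw
  have h0 : List.ofFn (fun i => w.get i) = w := List.ofFn_get w
  rw [Finset.sum_eq_single (fun i => w.get i)]
  · rw [if_pos h0.symm]
  · intro v _ hv
    rw [if_neg]
    intro h
    exact hv (List.ofFn_injective (h0.trans h).symm)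
  · intro h; exact absurd (Finset.mem_univ _) h

include hp0 hp1 in
lemma kraft' {ι : Type*} [Fintype ι] (g : ι → List Bool) (P : ι → Prop) [DecidablePred P]
    (h : ∀ i i', P i → P i' → g i <+: g i' → i = i') :
    ∑ i, (if P i then pstr p (g i) else 0) ≤ 1 := by
  classical
  set N := Finset.univ.sup (fun i => (g i).length) with hN
  have hlen : ∀ i, (g i).length ≤ N := fun i => Finset.le_sup (f := fun i => (g i).length) (Finset.mem_univ i)
  have expand : ∀ i, (if P i then pstr p (g i) else 0)
      = ∑ v : Fin N → Bool, (if P i ∧ g i <+: List.ofFn v then pstr p (List.ofFn v) else 0) := by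
    intro i
    by_cases hi : P i
    · simp only [hi, true_and, if_pos]
      exact (sum_prefix_mul hp0 hp1 (g i) N (hlen i)).symm
    · simp [hi]
  rw [Finset.sum_congr rfl (fun i _ => expand i), Finset.sum_comm]
  calc ∑ v : Fin N → Bool, ∑ i, (if P i ∧ g i <+: List.ofFn v then pstr p (List.ofFn v) else 0)
      ≤ ∑ v : Fin N → Bool, pstr p (List.ofFn v) := by
        apply Finset.sum_le_sum
        intro v _
        by_cases hex : ∃ i, P i ∧ g i <+: List.ofFn v
        · obtain ⟨i0, hi0⟩ := hex
          rw [Finset.sum_eq_single i0]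
          · rw [if_pos hi0]
          · intro i _ hii
            rw [if_neg]
            rintro ⟨hPi, hpre⟩
            rcases List.prefix_or_prefix_of_prefix hpre hi0.2 with h1 | h1
            · exact hii (h i i0 hPi hi0.1 h1)
            · exact hii (h i0 i hi0.1 hPi h1).symm
          · intro h; exact absurd (Finset.mem_univ _) h
        · rw [Finset.sum_eq_zero]
          · exact le_of_lt (pstr_pos hp0 hp1 _)
          · intro i _
            rw [if_neg (fun hc => hex ⟨i, hc⟩)]
    _ = 1 := sum_pstr_ofFn hp0 hp1 N

end aux

lemma log_sum_ineq {ι : Type*} [Fintype ι] (b r : ι → ℝ)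
    (hb : ∀ i, 0 ≤ b i) (hr : ∀ i, 0 < r i) :
    (∑ i, b i * r i) * Real.log ((∑ i, b i * r i) / (∑ i, b i))
      ≤ ∑ i, b i * r i * Real.log (r i) := by
  set S := ∑ i, b i with hS
  rcases eq_or_lt_of_le (Finset.sum_nonneg (fun i _ => hb i) : (0:ℝ) ≤ S) with h0 | h0
  · have hz : ∀ i, b i = 0 := by
      intro i
      have := (Finset.sum_eq_zero_iff_of_nonneg (fun i _ => hb i)).mp h0.symm
      exact this i (Finset.mem_univ i)
    simp [hz]
  · have key := Real.convexOn_mul_log.map_sum_le (t := Finset.univ)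
      (w := fun i => b i / S) (p := r) (fun i _ => div_nonneg (hb i) h0.le)
      (by rw [← Finset.sum_div, div_self h0.ne']) (fun i _ => (hr i).le)
    have hA : ∑ i, (b i / S) • r i = (∑ i, b i * r i) / S := by
      rw [Finset.sum_div]
      congr 1; ext i; rw [smul_eq_mul]; ring
    rw [hA] at key
    have key2 : S * ((∑ i, b i * r i) / S * Real.log ((∑ i, b i * r i) / S))
        ≤ S * ∑ i, (b i / S) • (r i * Real.log (r i)) :=
      mul_le_mul_of_nonneg_left key h0.le
    have hS0 : S ≠ 0 := ne_of_gt h0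
    calc (∑ i, b i * r i) * Real.log ((∑ i, b i * r i) / S)
        = S * ((∑ i, b i * r i) / S * Real.log ((∑ i, b i * r i) / S)) := by
          rw [← mul_assoc, mul_div_cancel₀ _ hS0]
      _ ≤ S * ∑ i, (b i / S) • (r i * Real.log (r i)) := key2
      _ = ∑ i, b i * r i * Real.log (r i) := by
          rw [Finset.mul_sum]
          congr 1; ext i; rw [smul_eq_mul, ← mul_assoc, mul_div_cancel₀ _ hS0, mul_assoc]

lemma logb_sum_ineq {ι : Type*} [Fintype ι] (b r : ι → ℝ)
    (hb : ∀ i, 0 ≤ b i) (hr : ∀ i, 0 < r i) (Q : ℝ) (hQ : 0 < Q)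
    (hBQ : ∑ i, b i ≤ Q) :
    (∑ i, b i * r i) * Real.logb 2 ((∑ i, b i * r i) / Q)
      ≤ ∑ i, b i * r i * Real.logb 2 (r i) := by
  set A := ∑ i, b i * r i with hA
  have hAnn : 0 ≤ A := Finset.sum_nonneg (fun i _ => mul_nonneg (hb i) (hr i).le)
  rcases eq_or_lt_of_le hAnn with h0 | h0
  · have hz := (Finset.sum_eq_zero_iff_of_nonneg
      (fun i _ => mul_nonneg (hb i) (hr i).le)).mp h0.symm
    rw [← h0]
    rw [Finset.sum_congr rfl (fun i hi => by rw [hz i hi, zero_mul])]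
    simp
  · set B := ∑ i, b i with hB
    have hBpos : 0 < B := by
      by_contra hc
      push_neg at hc
      have : B = 0 := le_antisymm hc (Finset.sum_nonneg (fun i _ => hb i))
      have hz := (Finset.sum_eq_zero_iff_of_nonneg (fun i _ => hb i)).mp this
      have : A = 0 := by
        apply Finset.sum_eq_zero
        intro i hi; rw [hz i hi, zero_mul]
      exact absurd this h0.ne'
    have step1 : A * Real.logb 2 (A / Q) ≤ A * Real.logb 2 (A / B) := by
      apply mul_le_mul_of_nonneg_left _ hAnn
      apply Real.logb_le_logb_of_le (by norm_num) (div_pos h0 hQ)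
      exact div_le_div_of_nonneg_left hAnn hBpos hBQ
    refine step1.trans ?_
    have hlog2 : (0:ℝ) < Real.log 2 := Real.log_pos (by norm_num)
    have main := log_sum_ineq b r hb hr
    have : A * Real.logb 2 (A / B) = (A * Real.log (A / B)) / Real.log 2 := by
      rw [Real.logb]; ring
    rw [this]
    have : ∑ i, b i * r i * Real.logb 2 (r i)
        = (∑ i, b i * r i * Real.log (r i)) / Real.log 2 := by
      rw [Finset.sum_div]
      congr 1; ext i; rw [Real.logb]; ring
    rw [this]
    gcongr

lemma catk_zero {C : Finset (List Bool)} (c : Fin 0 → {x // x ∈ C}) : catk c = [] := by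
  simp [catk]

lemma catk_succ {C : Finset (List Bool)} {k : ℕ} (c : Fin (k+1) → {x // x ∈ C}) :
    catk c = (c 0 : List Bool) ++ catk (fun i => c i.succ) := by
  simp [catk, List.ofFn_succ]

lemma pstr_catk (p : ℝ) {C : Finset (List Bool)} : ∀ {k : ℕ} (c : Fin k → {x // x ∈ C}),
    pstr p (catk c) = ∏ i, pstr p (c i : List Bool) := by
  intro k
  induction k with
  | zero => intro c; simp [catk_zero, pstr]
  | succ k ih =>
    intro c
    rw [catk_succ, Fin.prod_univ_succ, ← ih (fun i => c i.succ)]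
    simp [pstr]

lemma catk_prefix_eq {C : Finset (List Bool)}
    (hpf : ∀ c ∈ C, ∀ d ∈ C, c <+: d → c = d) :
    ∀ {k : ℕ} (c c' : Fin k → {x // x ∈ C}), catk c <+: catk c' → c = c' := by
  intro k
  induction k with
  | zero => intro c c' _; ext i; exact absurd i.2 (by simp)
  | succ k ih =>
    intro c c' h
    rw [catk_succ c, catk_succ c'] at h
    have h1 : (c 0 : List Bool) <+: (c' 0 : List Bool) ++ catk (fun i => c' i.succ) :=
      ((c 0 : List Bool).prefix_append _).trans h
    have h2 : (c' 0 : List Bool) <+: (c' 0 : List Bool) ++ catk (fun i => c' i.succ) :=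
      (c' 0 : List Bool).prefix_append _
    have heq : (c 0 : List Bool) = (c' 0 : List Bool) := by
      rcases List.prefix_or_prefix_of_prefix h1 h2 with hh | hh
      · exact hpf _ (c 0).2 _ (c' 0).2 hh
      · exact (hpf _ (c' 0).2 _ (c 0).2 hh).symm
    rw [heq, List.prefix_append_right_inj] at h
    have htail := ih _ _ h
    funext i
    refine Fin.cases ?_ ?_ i
    · exact Subtype.ext heq
    · intro j
      exact congrFun htail j
lemma sum_tuple_apply {α : Type*} [Fintype α] [DecidableEq α] {k : ℕ} (i : Fin k) (f : α → ℝ) :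
    ∑ c : Fin k → α, f (c i) = (Fintype.card α : ℝ)^(k-1) * ∑ x, f x := by
  have h := Fintype.sum_equiv (Equiv.funSplitAt i α) (fun c => f (c i))
    (fun q => f q.1) (fun c => rfl)
  rw [h, Fintype.sum_prod_type]
  have hcard : Fintype.card ({j : Fin k // j ≠ i} → α) = Fintype.card α ^ (k-1) := by
    rw [Fintype.card_fun]
    congr 1
    rw [Fintype.card_subtype_compl, Fintype.card_subtype_eq, Fintype.card_fin]
  rw [Finset.mul_sum]
  congr 1
  ext x
  show ∑ _y : { j // j ≠ i } → α, f x = _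
  rw [Finset.sum_const, nsmul_eq_mul, Finset.card_univ, hcard]
  push_cast
  ring

-- ### new material

noncomputable def Bfun (p : ℝ) (n : ℕ) {C : Finset (List Bool)} {k : ℕ}
    (c : Fin k → {x // x ∈ C}) (v : Fin n → Bool) : ℝ :=
  (if (catk c).length ≤ n ∧ catk c <+: List.ofFn v then pstr p (List.ofFn v) else 0) +
  (if n < (catk c).length ∧ (catk c).take n = List.ofFn v then pstr p (catk c) else 0)

noncomputable def Rfun (p : ℝ) (j k : ℕ) {C : Finset (List Bool)}
    (c : Fin k → {x // x ∈ C}) : ℝ :=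
  ((2 : ℝ) ^ (j * k))⁻¹ / pstr p (catk c)

variable {p : ℝ}

lemma Rfun_pos (hp0 : 0 < p) (hp1 : p < 1) (j k : ℕ) {C : Finset (List Bool)}
    (c : Fin k → {x // x ∈ C}) : 0 < Rfun p j k c :=
  div_pos (by positivity) (pstr_pos hp0 hp1 _)

lemma Bfun_nonneg (hp0 : 0 < p) (hp1 : p < 1) (n : ℕ) {C : Finset (List Bool)} {k : ℕ}
    (c : Fin k → {x // x ∈ C}) (v : Fin n → Bool) : 0 ≤ Bfun p n c v := by
  unfold Bfun
  have h1 := pstr_pos hp0 hp1 (List.ofFn v)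
  have h2 := pstr_pos hp0 hp1 (catk c)
  positivity

lemma PV_eq (hp0 : 0 < p) (hp1 : p < 1) (j k n : ℕ) {C : Finset (List Bool)}
    (v : Fin n → Bool) :
    PV p j k n C v = ∑ c : Fin k → {x // x ∈ C}, Bfun p n c v * Rfun p j k c := by
  rw [PV]
  apply Finset.sum_congr rfl
  intro c _
  have hpos := pstr_pos hp0 hp1 (catk c)
  rw [Bfun, Rfun, add_mul]
  congr 1
  · by_cases h : (catk c).length ≤ n ∧ catk c <+: List.ofFn v
    · rw [if_pos h, if_pos h]
      obtain ⟨t, ht⟩ := h.2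
      rw [← ht, List.drop_left, pstr_append]
      field_simp
    · simp [h]
  · by_cases h : n < (catk c).length ∧ (catk c).take n = List.ofFn v
    · rw [if_pos h, if_pos h]
      field_simp
    · simp [h]

lemma Bfun_col (hp0 : 0 < p) (hp1 : p < 1) (n : ℕ) {C : Finset (List Bool)} {k : ℕ}
    (c : Fin k → {x // x ∈ C}) :
    ∑ v : Fin n → Bool, Bfun p n c v = pstr p (catk c) := by
  by_cases h : (catk c).length ≤ n
  · have h2 : ∀ v : Fin n → Bool, Bfun p n c v
        = if catk c <+: List.ofFn v then pstr p (List.ofFn v) else 0 := by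
      intro v
      have hno : ¬(n < (catk c).length ∧ (catk c).take n = List.ofFn v) :=
        fun hc => absurd hc.1 (not_lt.mpr h)
      rw [Bfun, if_neg hno, add_zero]
      by_cases hP : catk c <+: List.ofFn v <;> simp [h, hP]
    rw [Finset.sum_congr rfl (fun v _ => h2 v)]
    exact sum_prefix_mul hp0 hp1 _ n h
  · have hlt := not_le.mp h
    have h2 : ∀ v : Fin n → Bool, Bfun p n c v
        = if (catk c).take n = List.ofFn v then pstr p (catk c) else 0 := by
      intro v
      have hno : ¬((catk c).length ≤ n ∧ catk c <+: List.ofFn v) :=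
        fun hc => absurd hc.1 h
      rw [Bfun, if_neg hno, zero_add]
      by_cases hP : (catk c).take n = List.ofFn v <;> simp [hlt, hP]
    rw [Finset.sum_congr rfl (fun v _ => h2 v)]
    exact sum_indicator_eq_list hp0 hp1 n _ (by rw [List.length_take]; omega) _

lemma Bfun_row (hp0 : 0 < p) (hp1 : p < 1) {C : Finset (List Bool)}
    (hpf : ∀ c ∈ C, ∀ d ∈ C, c <+: d → c = d) {k n : ℕ} (v : Fin n → Bool) :
    ∑ c : Fin k → {x // x ∈ C}, Bfun p n c v ≤ pstr p (List.ofFn v) := by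
  classical
  by_cases hex : ∃ c0 : Fin k → {x // x ∈ C},
      (catk c0).length ≤ n ∧ catk c0 <+: List.ofFn v
  · obtain ⟨c0, hc0⟩ := hex
    have heq : ∑ c : Fin k → {x // x ∈ C}, Bfun p n c v = pstr p (List.ofFn v) := by
      rw [Finset.sum_eq_single c0]
      · have hno : ¬(n < (catk c0).length ∧ (catk c0).take n = List.ofFn v) :=
          fun hc => absurd hc.1 (not_lt.mpr hc0.1)
        rw [Bfun, if_pos hc0, if_neg hno, add_zero]
      · intro c _ hc
        have hA : ¬((catk c).length ≤ n ∧ catk c <+: List.ofFn v) := by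
          rintro ⟨-, hpre⟩
          rcases List.prefix_or_prefix_of_prefix hpre hc0.2 with h1 | h1
          · exact hc (catk_prefix_eq hpf c c0 h1)
          · exact hc (catk_prefix_eq hpf c0 c h1).symm
        have hB : ¬(n < (catk c).length ∧ (catk c).take n = List.ofFn v) := by
          rintro ⟨hlt, htake⟩
          have hv : List.ofFn v <+: catk c := htake ▸ List.take_prefix n (catk c)
          have h1 := catk_prefix_eq hpf c0 c (hc0.2.trans hv)
          rw [← h1] at hlt
          exact absurd hc0.1 (not_le.mpr hlt)
        rw [Bfun, if_neg hA, if_neg hB, add_zero]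
      · intro h; exact absurd (Finset.mem_univ _) h
    rw [heq]
  · have h2 : ∀ c : Fin k → {x // x ∈ C}, Bfun p n c v = pstr p (List.ofFn v) *
        (if n < (catk c).length ∧ (catk c).take n = List.ofFn v
          then pstr p ((catk c).drop n) else 0) := by
      intro c
      have hno : ¬((catk c).length ≤ n ∧ catk c <+: List.ofFn v) :=
        fun hc => hex ⟨c, hc⟩
      rw [Bfun, if_neg hno, zero_add]
      by_cases h : n < (catk c).length ∧ (catk c).take n = List.ofFn v
      · rw [if_pos h, if_pos h]
        conv_lhs => rw [← List.take_append_drop n (catk c), pstr_append, h.2]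
      · simp [h]
    rw [Finset.sum_congr rfl (fun c _ => h2 c), ← Finset.mul_sum]
    have hkr := kraft' hp0 hp1 (fun c : Fin k → {x // x ∈ C} => (catk c).drop n)
      (fun c => n < (catk c).length ∧ (catk c).take n = List.ofFn v)
      (by
        intro c c' hc hc' hdd
        have h1 : catk c = List.ofFn v ++ (catk c).drop n := by
          conv_lhs => rw [← List.take_append_drop n (catk c), hc.2]
        have h2' : catk c' = List.ofFn v ++ (catk c').drop n := by
          conv_lhs => rw [← List.take_append_drop n (catk c'), hc'.2]
        have hpre : List.ofFn v ++ (catk c).drop n <+: List.ofFn v ++ (catk c').drop n :=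
          (List.prefix_append_right_inj _).mpr hdd
        rw [← h1, ← h2'] at hpre
        exact catk_prefix_eq hpf c c' hpre)
    calc pstr p (List.ofFn v) * ∑ c : Fin k → {x // x ∈ C},
          (if n < (catk c).length ∧ (catk c).take n = List.ofFn v
            then pstr p ((catk c).drop n) else 0)
        ≤ pstr p (List.ofFn v) * 1 :=
          mul_le_mul_of_nonneg_left hkr (pstr_pos hp0 hp1 _).le
      _ = pstr p (List.ofFn v) := mul_one _

lemma key_identity (hp0 : 0 < p) (hp1 : p < 1) (j k : ℕ) (hk : 1 ≤ k)
    {C : Finset (List Bool)} (hcard : C.card = 2 ^ j) :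
    ∑ c : Fin k → {x // x ∈ C},
        ((2 : ℝ) ^ (j * k))⁻¹ * Real.logb 2 (((2 : ℝ) ^ (j * k))⁻¹ / pstr p (catk c))
      = k * ∑ c ∈ C, ((2 : ℝ) ^ j)⁻¹ * Real.logb 2 (((2 : ℝ) ^ j)⁻¹ / pstr p c) := by
  classical
  set q : ℝ := ((2 : ℝ) ^ j)⁻¹ with hq
  set W : ℝ := ((2 : ℝ) ^ (j * k))⁻¹ with hWdef
  set G : ℝ := Real.logb 2 q with hG
  set T : ℝ := ∑ c ∈ C, Real.logb 2 (pstr p c) with hT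
  have hWpos : (0 : ℝ) < W := by rw [hWdef]; positivity
  have hqpos : (0 : ℝ) < q := by rw [hq]; positivity
  have hWq : W = q ^ k := by rw [hWdef, hq, pow_mul, ← inv_pow]
  have hlogW : ∀ c : Fin k → {x // x ∈ C},
      Real.logb 2 (W / pstr p (catk c))
        = (k : ℝ) * G - ∑ i, Real.logb 2 (pstr p (c i : List Bool)) := by
    intro c
    rw [Real.logb_div hWpos.ne' (pstr_pos hp0 hp1 _).ne', hWq, Real.logb_pow]
    congr 1
    rw [pstr_catk, Real.logb, Real.log_prod (fun i _ => (pstr_pos hp0 hp1 _).ne'),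
      Finset.sum_div]
    simp [Real.logb]
  have hsum1 : ∑ c : Fin k → {x // x ∈ C}, ∑ i, Real.logb 2 (pstr p (c i : List Bool))
      = (k : ℝ) * ((2 : ℝ) ^ j) ^ (k - 1) * T := by
    rw [Finset.sum_comm]
    have hper : ∀ i : Fin k, ∑ c : Fin k → {x // x ∈ C},
        Real.logb 2 (pstr p (c i : List Bool)) = ((2 : ℝ) ^ j) ^ (k - 1) * T := by
      intro i
      rw [sum_tuple_apply i (fun x : {x // x ∈ C} => Real.logb 2 (pstr p (x : List Bool)))]
      congr 1
      · rw [Fintype.card_coe, hcard]; push_cast; ring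
      · rw [hT]
        exact Finset.sum_coe_sort C (fun c => Real.logb 2 (pstr p c))
    rw [Finset.sum_congr rfl (fun i _ => hper i), Finset.sum_const, Finset.card_univ,
      Fintype.card_fin, nsmul_eq_mul]
    ring
  have hD : ∑ c ∈ C, q * Real.logb 2 (q / pstr p c) = G - q * T := by
    have hper : ∀ c ∈ C, q * Real.logb 2 (q / pstr p c)
        = q * G - q * Real.logb 2 (pstr p c) := by
      intro c hc
      rw [Real.logb_div hqpos.ne' (pstr_pos hp0 hp1 c).ne']
      ring
    rw [Finset.sum_congr rfl hper, Finset.sum_sub_distrib, Finset.sum_const, ← Finset.mul_sum,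
      ← hT, hcard, nsmul_eq_mul]
    have e3 : q * (2 : ℝ) ^ j = 1 := by rw [hq]; field_simp
    push_cast
    linear_combination G * e3
  have hcardtuple : (Fintype.card (Fin k → {x // x ∈ C}) : ℝ) = ((2 : ℝ) ^ j) ^ k := by
    rw [Fintype.card_fun, Fintype.card_coe, hcard, Fintype.card_fin]; push_cast; ring
  have hsplit : ∀ c : Fin k → {x // x ∈ C},
      W * Real.logb 2 (W / pstr p (catk c))
        = W * ((k : ℝ) * G) - W * ∑ i, Real.logb 2 (pstr p (c i : List Bool)) := by
    intro c
    rw [hlogW c]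
    ring
  rw [Finset.sum_congr rfl (fun c _ => hsplit c), Finset.sum_sub_distrib, Finset.sum_const,
    Finset.card_univ, ← Finset.mul_sum, hsum1, hD, nsmul_eq_mul, hcardtuple]
  have e1 : W * ((2 : ℝ) ^ j) ^ k = 1 := by
    rw [hWdef, pow_mul]; field_simp
  have e2 : W * ((2 : ℝ) ^ j) ^ (k - 1) = q := by
    have hpk : ((2 : ℝ) ^ j) ^ k = ((2 : ℝ) ^ j) ^ (k - 1) * (2 : ℝ) ^ j := by
      rw [← pow_succ]
      congr 1
      omega
    rw [hWdef, pow_mul, hpk, hq]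
    rw [mul_inv]
    have h2j : ((2 : ℝ) ^ j) ^ (k - 1) ≠ 0 := by positivity
    field_simp
  linear_combination ((k : ℝ) * G) * e1 - ((k : ℝ) * T) * e2

lemma D_nonneg (hp0 : 0 < p) (hp1 : p < 1) (j : ℕ) {C : Finset (List Bool)}
    (hpf : ∀ c ∈ C, ∀ d ∈ C, c <+: d → c = d) (hcard : C.card = 2 ^ j) :
    0 ≤ ∑ c ∈ C, ((2 : ℝ) ^ j)⁻¹ * Real.logb 2 (((2 : ℝ) ^ j)⁻¹ / pstr p c) := by
  classical
  set q : ℝ := ((2 : ℝ) ^ j)⁻¹ with hq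
  have hqpos : (0 : ℝ) < q := by rw [hq]; positivity
  have hkraftC : ∑ x : {x // x ∈ C}, pstr p (x : List Bool) ≤ 1 := by
    have h := kraft' hp0 hp1 (fun x : {x // x ∈ C} => (x : List Bool)) (fun _ => True)
      (fun i i' _ _ h => Subtype.ext (hpf _ i.2 _ i'.2 h))
    simpa using h
  have key := logb_sum_ineq (fun x : {x // x ∈ C} => pstr p (x : List Bool))
    (fun x => q / pstr p (x : List Bool)) (fun x => (pstr_pos hp0 hp1 _).le)
    (fun x => div_pos hqpos (pstr_pos hp0 hp1 _)) 1 one_pos hkraftC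
  have hbr : ∑ x : {x // x ∈ C}, pstr p (x : List Bool) * (q / pstr p (x : List Bool)) = 1 := by
    have hper : ∀ x : {x // x ∈ C}, pstr p (x : List Bool) * (q / pstr p (x : List Bool)) = q := by
      intro x
      rw [mul_div_cancel₀ _ (pstr_pos hp0 hp1 _).ne']
    rw [Finset.sum_congr rfl (fun x _ => hper x), Finset.sum_const, Finset.card_univ,
      Fintype.card_coe, hcard, nsmul_eq_mul]
    push_cast
    rw [hq]
    field_simp
  rw [hbr] at key
  simp only [div_one, Real.logb_one, one_mul] at key
  calc (0 : ℝ) ≤ ∑ x : {x // x ∈ C},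
        pstr p (x : List Bool) * (q / pstr p (x : List Bool))
          * Real.logb 2 (q / pstr p (x : List Bool)) := key
    _ = ∑ c ∈ C, q * Real.logb 2 (q / pstr p c) := by
        rw [← Finset.sum_coe_sort C (fun c => q * Real.logb 2 (q / pstr p c))]
        apply Finset.sum_congr rfl
        intro x _
        congr 1
        rw [mul_div_cancel₀ _ (pstr_pos hp0 hp1 _).ne']


/-- **Proposition 3: divergence bound for the ε-error b2b matcher.**
Let `P_Y` be a binary target distribution (`P_Y(1) = p`, `0 < p < 1`), let `C`
be a finite prefix-free set of nonempty binary strings with `|C| = 2^j`, let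
`k ≥ 1`, `m = jk`, and let `n` be an integer with `n ≥ k·E[ℓ(U)]`, where `U` is
uniform on `C` (so `E[ℓ(U)] = (Σ_{c∈C} ℓ(c)) / 2^j`).  Then, with `P_V` the
output distribution on `{0,1}^n` defined above,
`D(P_V ‖ P_Y^n)/n ≤ D(P_U ‖ P_Y⁺)/E[ℓ(U)]`, where
`D(P_U ‖ P_Y⁺) = Σ_{c∈C} 2^{-j} log₂(2^{-j}/P_Y^{ℓ(c)}(c))`. -/
theorem epsilon_error_b2b_divergence_bound
    (p : ℝ) (hp0 : 0 < p) (hp1 : p < 1)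
    (j k n : ℕ) (hk : 1 ≤ k)
    (C : Finset (List Bool))
    (hpf : ∀ c ∈ C, ∀ d ∈ C, c <+: d → c = d)
    (hne : ∀ c ∈ C, c ≠ [])
    (hcard : C.card = 2 ^ j)
    (hn : (k : ℝ) * ((∑ c ∈ C, (c.length : ℝ)) / 2 ^ j) ≤ n) :
    (∑ v : Fin n → Bool,
        PV p j k n C v * Real.logb 2 (PV p j k n C v / pstr p (List.ofFn v))) / n ≤
      (∑ c ∈ C, ((2 : ℝ) ^ j)⁻¹ * Real.logb 2 (((2 : ℝ) ^ j)⁻¹ / pstr p c)) /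
        ((∑ c ∈ C, (c.length : ℝ)) / 2 ^ j) := by
  classical
  have hstep : ∀ v : Fin n → Bool,
      PV p j k n C v * Real.logb 2 (PV p j k n C v / pstr p (List.ofFn v))
        ≤ ∑ c : Fin k → {x // x ∈ C},
            Bfun p n c v * Rfun p j k c * Real.logb 2 (Rfun p j k c) := by
    intro v
    rw [PV_eq hp0 hp1 j k n v]
    exact logb_sum_ineq (fun c => Bfun p n c v) (Rfun p j k)
      (fun c => Bfun_nonneg hp0 hp1 n c v) (Rfun_pos hp0 hp1 j k)
      (pstr p (List.ofFn v)) (pstr_pos hp0 hp1 _) (Bfun_row hp0 hp1 hpf v)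
  have hDV : (∑ v : Fin n → Bool,
      PV p j k n C v * Real.logb 2 (PV p j k n C v / pstr p (List.ofFn v)))
      ≤ (k : ℝ) * ∑ c ∈ C, ((2 : ℝ) ^ j)⁻¹ * Real.logb 2 (((2 : ℝ) ^ j)⁻¹ / pstr p c) := by
    calc ∑ v : Fin n → Bool,
          PV p j k n C v * Real.logb 2 (PV p j k n C v / pstr p (List.ofFn v))
        ≤ ∑ v : Fin n → Bool, ∑ c : Fin k → {x // x ∈ C},
            Bfun p n c v * Rfun p j k c * Real.logb 2 (Rfun p j k c) :=
          Finset.sum_le_sum (fun v _ => hstep v)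
      _ = ∑ c : Fin k → {x // x ∈ C}, ∑ v : Fin n → Bool,
            Bfun p n c v * Rfun p j k c * Real.logb 2 (Rfun p j k c) := Finset.sum_comm
      _ = ∑ c : Fin k → {x // x ∈ C},
            ((2 : ℝ) ^ (j * k))⁻¹ * Real.logb 2 (((2 : ℝ) ^ (j * k))⁻¹ / pstr p (catk c)) := by
          apply Finset.sum_congr rfl
          intro c _
          have h1 : ∀ v : Fin n → Bool,
              Bfun p n c v * Rfun p j k c * Real.logb 2 (Rfun p j k c)
                = Bfun p n c v * (Rfun p j k c * Real.logb 2 (Rfun p j k c)) :=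
            fun v => by ring
          rw [Finset.sum_congr rfl (fun v _ => h1 v), ← Finset.sum_mul,
            Bfun_col hp0 hp1 n c]
          have h2 : pstr p (catk c) * (((2 : ℝ) ^ (j * k))⁻¹ / pstr p (catk c))
              = ((2 : ℝ) ^ (j * k))⁻¹ := mul_div_cancel₀ _ (pstr_pos hp0 hp1 _).ne'
          rw [Rfun, ← mul_assoc, h2]
      _ = (k : ℝ) * ∑ c ∈ C, ((2 : ℝ) ^ j)⁻¹ * Real.logb 2 (((2 : ℝ) ^ j)⁻¹ / pstr p c) :=
          key_identity hp0 hp1 j k hk hcard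
  have hD0 := D_nonneg (p := p) hp0 hp1 j hpf hcard
  have hE1 : (1 : ℝ) ≤ (∑ c ∈ C, (c.length : ℝ)) / 2 ^ j := by
    rw [le_div_iff₀ (by positivity : (0 : ℝ) < 2 ^ j), one_mul]
    calc (2 : ℝ) ^ j = ∑ _c ∈ C, (1 : ℝ) := by
          rw [Finset.sum_const, nsmul_eq_mul, mul_one, hcard]; push_cast; ring
      _ ≤ ∑ c ∈ C, (c.length : ℝ) := by
          apply Finset.sum_le_sum
          intro c hc
          have : 0 < c.length := List.length_pos_iff.mpr (hne c hc)
          exact_mod_cast this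
  have hkpos : (0 : ℝ) < k := by exact_mod_cast hk
  have hkE : (0 : ℝ) < (k : ℝ) * ((∑ c ∈ C, (c.length : ℝ)) / 2 ^ j) :=
    mul_pos hkpos (lt_of_lt_of_le one_pos hE1)
  have hn0 : (0 : ℝ) < n := lt_of_lt_of_le hkE hn
  calc (∑ v : Fin n → Bool,
        PV p j k n C v * Real.logb 2 (PV p j k n C v / pstr p (List.ofFn v))) / n
      ≤ ((k : ℝ) * ∑ c ∈ C, ((2 : ℝ) ^ j)⁻¹ * Real.logb 2 (((2 : ℝ) ^ j)⁻¹ / pstr p c)) / n :=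
        by gcongr
    _ ≤ ((k : ℝ) * ∑ c ∈ C, ((2 : ℝ) ^ j)⁻¹ * Real.logb 2 (((2 : ℝ) ^ j)⁻¹ / pstr p c))
          / ((k : ℝ) * ((∑ c ∈ C, (c.length : ℝ)) / 2 ^ j)) := by
        apply div_le_div_of_nonneg_left _ hkE hn
        exact mul_nonneg hkpos.le hD0
    _ = (∑ c ∈ C, ((2 : ℝ) ^ j)⁻¹ * Real.logb 2 (((2 : ℝ) ^ j)⁻¹ / pstr p c)) /
          ((∑ c ∈ C, (c.length : ℝ)) / 2 ^ j) := mul_div_mul_left _ _ (ne_of_gt hkpos)
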